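/- Let H be a 3-uniform linear hypergraph containing no Berge cycle of length 4, let v be a vertex, and let x ∈ N₁(v). Then the number of hyperedges h containing x with |h ∩ N₁(v)| ≥ 2 is at most 3. -/

import Mathlib

open Finset

/-- Degree of a vertex: number of hyperedges containing it. -/
def hyperDeg {V : Type*} [DecidableEq V] (H : Finset (Finset V)) (v : V) : ℕ :=
  (H.filter fun e => v ∈ e).card

/-- First neighborhood: vertices other than `v` sharing a hyperedge with `v`. -/
def N1 {V : Type*} [DecidableEq V] (H : Finset (Finset V)) (v : V) : Finset V :=
  ((H.filter fun e => v ∈ e).biUnion id).erase v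

/-- Second neighborhood: vertices outside `N1 H v ∪ {v}` lying in a hyperedge
that meets `N1 H v`. -/
def N2 {V : Type*} [DecidableEq V] (H : Finset (Finset V)) (v : V) : Finset V :=
  ((H.filter fun e => (e ∩ N1 H v).Nonempty).biUnion id) \ insert v (N1 H v)

/-- A hypergraph is linear if any two distinct hyperedges share at most one vertex. -/
def IsLinear {V : Type*} [DecidableEq V] (H : Finset (Finset V)) : Prop :=
  ∀ e ∈ H, ∀ f ∈ H, e ≠ f → (e ∩ f).card ≤ 1

/-- A Berge cycle of length `k`: `k` distinct vertices and `k` distinct hyperedges,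
with `v i, v (i+1) ∈ h i` cyclically. -/
def HasBergeCycle {V : Type*} (H : Finset (Finset V)) (k : ℕ) : Prop :=
  ∃ (v : ZMod k → V) (h : ZMod k → Finset V),
    Function.Injective v ∧ Function.Injective h ∧
    ∀ i, h i ∈ H ∧ v i ∈ h i ∧ v (i + 1) ∈ h i

/-! At most one hyperedge through `x` contains `v`, since `H` is linear. Each of the others meets
`N₁(v)` in some `y ≠ x`, lying in a hyperedge `f` through `v`; these `y` are pairwise distinct by
linearity. Two different such `f` would close the Berge cycle `v, y, x, y'`, so all the `y` lie in
a single hyperedge through `v`, which leaves room for only two of them. -/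

theorem hasBergeCycle_four {V : Type*} {H : Finset (Finset V)} {v₀ v₁ v₂ v₃ : V}
    {h₀ h₁ h₂ h₃ : Finset V} (hv : [v₀, v₁, v₂, v₃].Nodup) (hh : [h₀, h₁, h₂, h₃].Nodup)
    (mem₀ : h₀ ∈ H ∧ v₀ ∈ h₀ ∧ v₁ ∈ h₀) (mem₁ : h₁ ∈ H ∧ v₁ ∈ h₁ ∧ v₂ ∈ h₁)
    (mem₂ : h₂ ∈ H ∧ v₂ ∈ h₂ ∧ v₃ ∈ h₂) (mem₃ : h₃ ∈ H ∧ v₃ ∈ h₃ ∧ v₀ ∈ h₃) :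
    HasBergeCycle H 4 := by
  simp only [List.nodup_cons, List.mem_cons, List.not_mem_nil, not_or, List.nodup_nil] at hv hh
  refine ⟨![v₀, v₁, v₂, v₃], ![h₀, h₁, h₂, h₃], ?_, ?_, ?_⟩
  · intro i j hij
    fin_cases i <;> fin_cases j <;> simp_all <;> rfl
  · intro i j hij
    fin_cases i <;> fin_cases j <;> simp_all <;> rfl
  · intro i
    fin_cases i <;> assumption

section

variable {V : Type*} [DecidableEq V] {H : Finset (Finset V)}

theorem mem_N1 {v y : V} : y ∈ N1 H v ↔ y ≠ v ∧ ∃ f ∈ H, v ∈ f ∧ y ∈ f := by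
  simp [N1, and_assoc]

theorem IsLinear.eq_of_mem_of_mem (hLin : IsLinear H) {e f : Finset V} (he : e ∈ H) (hf : f ∈ H)
    {a b : V} (hab : a ≠ b) (hae : a ∈ e) (hbe : b ∈ e) (haf : a ∈ f) (hbf : b ∈ f) : e = f := by
  by_contra hef
  exact hab (card_le_one.mp (hLin e he f hf hef) a (mem_inter.mpr ⟨hae, haf⟩) b
    (mem_inter.mpr ⟨hbe, hbf⟩))

theorem IsLinear.card_filter_mem_mem_le_one (hLin : IsLinear H) {x v : V} (hxv : x ≠ v) :
    (H.filter fun h => x ∈ h ∧ v ∈ h).card ≤ 1 := by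
  refine card_le_one.mpr fun e he f hf => ?_
  rw [mem_filter] at he hf
  exact hLin.eq_of_mem_of_mem he.1 hf.1 hxv he.2.1 he.2.2 hf.2.1 hf.2.2

theorem IsLinear.eq_of_not_hasBergeCycle_four (hLin : IsLinear H) (hC4 : ¬ HasBergeCycle H 4)
    {v x y₁ y₂ : V} {e₁ e₂ f₁ f₂ : Finset V} (he₁ : e₁ ∈ H) (he₂ : e₂ ∈ H)
    (hf₁ : f₁ ∈ H) (hf₂ : f₂ ∈ H) (he : e₁ ≠ e₂) (hxv : x ≠ v)
    (hxe₁ : x ∈ e₁) (hxe₂ : x ∈ e₂) (hve₁ : v ∉ e₁) (hve₂ : v ∉ e₂)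
    (hy₁e₁ : y₁ ∈ e₁) (hy₂e₂ : y₂ ∈ e₂) (hy₁x : y₁ ≠ x) (hy₂x : y₂ ≠ x)
    (hvf₁ : v ∈ f₁) (hvf₂ : v ∈ f₂) (hy₁f₁ : y₁ ∈ f₁) (hy₂f₂ : y₂ ∈ f₂) : f₁ = f₂ := by
  by_contra hf
  have hy : y₁ ≠ y₂ := by
    rintro rfl
    exact he (hLin.eq_of_mem_of_mem he₁ he₂ hy₁x hy₁e₁ hxe₁ hy₂e₂ hxe₂)
  have hvy₁ : v ≠ y₁ := ne_of_mem_of_not_mem hy₁e₁ hve₁ |>.symm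
  have hvy₂ : v ≠ y₂ := ne_of_mem_of_not_mem hy₂e₂ hve₂ |>.symm
  refine hC4 (hasBergeCycle_four (v₀ := v) (v₁ := y₁) (v₂ := x) (v₃ := y₂) (h₀ := f₁) (h₁ := e₁)
    (h₂ := e₂) (h₃ := f₂) ?_ ?_ ⟨hf₁, hvf₁, hy₁f₁⟩ ⟨he₁, hy₁e₁, hxe₁⟩ ⟨he₂, hxe₂, hy₂e₂⟩
    ⟨hf₂, hy₂f₂, hvf₂⟩)
  · simp [hvy₁, hvy₂, hxv.symm, hy, hy₁x, hy₂x.symm]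
  · simp [hf, he, ne_of_mem_of_not_mem' hvf₁ hve₁, ne_of_mem_of_not_mem' hvf₁ hve₂,
      (ne_of_mem_of_not_mem' hvf₂ hve₁).symm, (ne_of_mem_of_not_mem' hvf₂ hve₂).symm]

theorem exists_mem_N1_ne_of_two_le_card {v x : V} {h : Finset V}
    (h2 : 2 ≤ (h ∩ N1 H v).card) : ∃ y ∈ h, y ≠ x ∧ ∃ f ∈ H, v ∈ f ∧ y ∈ f := by
  obtain ⟨y, hy, hyx⟩ := exists_mem_ne (s := h ∩ N1 H v) h2 x
  obtain ⟨hyh, hyN⟩ := mem_inter.mp hy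
  exact ⟨y, hyh, hyx, (mem_N1.mp hyN).2⟩

theorem card_filter_mem_notMem_two_le_inter_N1_le_two (hUnif : ∀ e ∈ H, e.card = 3)
    (hLin : IsLinear H) (hC4 : ¬ HasBergeCycle H 4) {v x : V} (hxv : x ≠ v) :
    (H.filter fun h => x ∈ h ∧ v ∉ h ∧ 2 ≤ (h ∩ N1 H v).card).card ≤ 2 := by
  set T := H.filter fun h => x ∈ h ∧ v ∉ h ∧ 2 ≤ (h ∩ N1 H v).card
  have path : ∀ h ∈ T, h ∈ H ∧ x ∈ h ∧ v ∉ h ∧ ∃ y ∈ h, y ≠ x ∧ ∃ f ∈ H, v ∈ f ∧ y ∈ f :=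
    fun h hh => by
      obtain ⟨hH, hxh, hvh, h2⟩ := mem_filter.mp hh
      exact ⟨hH, hxh, hvh, exists_mem_N1_ne_of_two_le_card h2⟩
  have same_edge : ∀ {e₁ e₂ y₁ y₂ f₁ f₂}, e₁ ∈ T → e₂ ∈ T → e₁ ≠ e₂ →
      y₁ ∈ e₁ → y₁ ≠ x → f₁ ∈ H → v ∈ f₁ → y₁ ∈ f₁ →
      y₂ ∈ e₂ → y₂ ≠ x → f₂ ∈ H → v ∈ f₂ → y₂ ∈ f₂ → f₁ = f₂ ∧ y₁ ≠ y₂ := by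
    intro e₁ e₂ y₁ y₂ f₁ f₂ h₁ h₂ he hy₁ hy₁x hf₁ hvf₁ hy₁f₁ hy₂ hy₂x hf₂ hvf₂ hy₂f₂
    obtain ⟨he₁, hxe₁, hve₁, -⟩ := path e₁ h₁
    obtain ⟨he₂, hxe₂, hve₂, -⟩ := path e₂ h₂
    refine ⟨hLin.eq_of_not_hasBergeCycle_four hC4 he₁ he₂ hf₁ hf₂ he hxv hxe₁ hxe₂ hve₁ hve₂
      hy₁ hy₂ hy₁x hy₂x hvf₁ hvf₂ hy₁f₁ hy₂f₂, ?_⟩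
    rintro rfl
    exact he (hLin.eq_of_mem_of_mem he₁ he₂ hy₁x hy₁ hxe₁ hy₂ hxe₂)
  by_contra! h3
  obtain ⟨a, ha, b, hb, c, hc, hab, hac, hbc⟩ := two_lt_card.mp h3
  obtain ⟨-, -, hva, ya, hya, hyax, fa, hfa, hvfa, hyafa⟩ := path a ha
  obtain ⟨-, -, hvb, yb, hyb, hybx, fb, hfb, hvfb, hybfb⟩ := path b hb
  obtain ⟨-, -, hvc, yc, hyc, hycx, fc, hfc, hvfc, hycfc⟩ := path c hc
  obtain ⟨rfl, hyab⟩ := same_edge ha hb hab hya hyax hfa hvfa hyafa hyb hybx hfb hvfb hybfb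
  obtain ⟨rfl, hyac⟩ := same_edge ha hc hac hya hyax hfa hvfa hyafa hyc hycx hfc hvfc hycfc
  obtain ⟨-, hybc⟩ := same_edge hb hc hbc hyb hybx hfa hvfb hybfb hyc hycx hfa hvfc hycfc
  have hsub : ({v, ya, yb, yc} : Finset V) ⊆ fa := by
    simp only [insert_subset_iff, singleton_subset_iff]
    exact ⟨hvfa, hyafa, hybfb, hycfc⟩
  have := card_le_card hsub
  rw [hUnif fa hfa, card_insert_of_notMem, card_insert_of_notMem, card_pair hybc] at this
  · omega
  · simp [hyab, hyac]
  · simp [(ne_of_mem_of_not_mem hya hva).symm, (ne_of_mem_of_not_mem hyb hvb).symm,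
      (ne_of_mem_of_not_mem hyc hvc).symm]

end

theorem stmt_5_general {V : Type*} [DecidableEq V]
    (H : Finset (Finset V))
    (hUnif : ∀ e ∈ H, e.card = 3)
    (hLin : IsLinear H)
    (hNoC4 : ¬ HasBergeCycle H 4)
    (v x : V) (hx : x ∈ N1 H v) :
    (H.filter fun h => x ∈ h ∧ 2 ≤ (h ∩ N1 H v).card).card ≤ 3 := by
  have hxv : x ≠ v := (mem_N1.mp hx).1
  rw [← card_filter_add_card_filter_not (p := fun h => v ∈ h), filter_filter, filter_filter]
  have through_v : (H.filter fun h => (x ∈ h ∧ 2 ≤ (h ∩ N1 H v).card) ∧ v ∈ h).card ≤ 1 :=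
    (card_le_card (monotone_filter_right _ fun _ _ hh => ⟨hh.1.1, hh.2⟩)).trans
      (hLin.card_filter_mem_mem_le_one hxv)
  have avoiding_v : (H.filter fun h => (x ∈ h ∧ 2 ≤ (h ∩ N1 H v).card) ∧ v ∉ h).card ≤ 2 :=
    (card_le_card (monotone_filter_right _ fun _ _ hh => ⟨hh.1.1, hh.2, hh.1.2⟩)).trans
      (card_filter_mem_notMem_two_le_inter_N1_le_two hUnif hLin hNoC4 hxv)
  omega

theorem stmt_5 {V : Type*} [Fintype V] [DecidableEq V]
    (H : Finset (Finset V))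
    (hUnif : ∀ e ∈ H, e.card = 3)
    (hLin : IsLinear H)
    (hNoC4 : ¬ HasBergeCycle H 4)
    (v x : V) (hx : x ∈ N1 H v) :
    (H.filter fun h => x ∈ h ∧ 2 ≤ (h ∩ N1 H v).card).card ≤ 3 :=
  stmt_5_general H hUnif hLin hNoC4 v x hx
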